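/- arXiv:math/0610352 — 2 statements merged into one kernel-verified Lean document; each statement's English description precedes it below -/
import Mathlib

section
/- Assume the static planning LP (minimize ρ s.t. Rx = λ, Ax ≤ eρ, x ≥ 0) has a UNIQUE optimal solution (ρ*, x*) with ρ* = 1 and Ax* = e. Suppose δ ∈ ℝ^m and t > 0 are such that there exist x, x' ≥ 0 with Ax ≤ e, Ax' ≤ e, Rx = λ − (1/t)δ, Rx' = λ + (1/t)δ. Then the vector y = t(x* − x) satisfies Ry = δ, Ay = 0, and y_j = 0 for every j with x*_j = 0. -/
/-!
The midpoint of `x` and `x'` is feasible for the unperturbed rate `λ` with `ρ = 1`, so by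
uniqueness it is `x*`. If two points lie weakly on one side of `c` and their midpoint is `c`, both
equal `c`; applied to `A x, A x' ≤ e = A x*` and to `0 ≤ x_j, x'_j` where `x*_j = 0`, this gives
`A x = e` and `x_j = 0`. The identities for `y = t (x* - x)` are then linear algebra.
-/

open Matrix

section OrderedModule

variable {k E : Type*} [Field k] [LinearOrder k] [IsStrictOrderedRing k]
  [AddCommGroup E] [PartialOrder E] [IsOrderedAddMonoid E]
  [Module k E] [IsStrictOrderedModule k E]

theorem left_eq_of_midpoint_eq_of_le {a b c : E} (ha : a ≤ c) (hb : b ≤ c)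
    (h : midpoint k a b = c) : a = c :=
  le_antisymm ha <| right_le_midpoint.1 <| h.symm.le.trans (midpoint_le_midpoint le_rfl hb)

theorem left_eq_of_midpoint_eq_of_ge {a b c : E} (ha : c ≤ a) (hb : c ≤ b)
    (h : midpoint k a b = c) : a = c :=
  left_eq_of_midpoint_eq_of_le (E := Eᵒᵈ) ha hb h

end OrderedModule

theorem Matrix.mulVec_midpoint {ι κ R : Type*} [Fintype κ] [CommRing R] [Invertible (2 : R)]
    (A : Matrix ι κ R) (x y : κ → R) :
    A *ᵥ midpoint R x y = midpoint R (A *ᵥ x) (A *ᵥ y) :=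
  A.mulVecLin.toAffineMap.map_midpoint x y

theorem stmt_6_general {m n r : ℕ} (R : Matrix (Fin m) (Fin n) ℝ)
    (A : Matrix (Fin r) (Fin n) ℝ)
    (lam : Fin m → ℝ)
    (xstar : Fin n → ℝ)
    (hRx : R.mulVec xstar = lam)
    (hAx : ∀ k, A.mulVec xstar k = 1)
    (huniq : ∀ x : Fin n → ℝ, 0 ≤ x → R.mulVec x = lam →
      (∀ k, A.mulVec x k ≤ 1) → x = xstar)
    (δ : Fin m → ℝ) (t : ℝ) (ht : 0 < t)
    (x x' : Fin n → ℝ) (hx : 0 ≤ x) (hx' : 0 ≤ x')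
    (hAxle : ∀ k, A.mulVec x k ≤ 1) (hAx'le : ∀ k, A.mulVec x' k ≤ 1)
    (hRxeq : R.mulVec x = lam - (1 / t) • δ)
    (hRx'eq : R.mulVec x' = lam + (1 / t) • δ) :
    R.mulVec (t • (xstar - x)) = δ ∧ A.mulVec (t • (xstar - x)) = 0 ∧
      ∀ j, xstar j = 0 → (t • (xstar - x)) j = 0 := by
  have hmid : midpoint ℝ x x' = xstar := by
    refine huniq _ (midpoint_self ℝ (0 : Fin n → ℝ) ▸ midpoint_le_midpoint hx hx') ?_ ?_
    · rw [mulVec_midpoint, hRxeq, hRx'eq, midpoint_sub_add]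
    · show A *ᵥ midpoint ℝ x x' ≤ 1
      rw [mulVec_midpoint, ← midpoint_self ℝ (1 : Fin r → ℝ)]
      exact midpoint_le_midpoint hAxle hAx'le
  have hAxstar : A *ᵥ xstar = 1 := funext hAx
  have hAx_eq : A *ᵥ x = 1 :=
    left_eq_of_midpoint_eq_of_le (k := ℝ) hAxle hAx'le (by rw [← mulVec_midpoint, hmid, hAxstar])
  have hx_supp : ∀ j, xstar j = 0 → x j = 0 := fun j hj =>
    left_eq_of_midpoint_eq_of_ge (k := ℝ) (hx j) (hx' j) ((congrFun hmid j).trans hj)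
  refine ⟨?_, ?_, fun j hj => by simp [hj, hx_supp j hj]⟩
  · rw [mulVec_smul, mulVec_sub, hRx, hRxeq, sub_sub_cancel, smul_smul,
      one_div, mul_inv_cancel₀ ht.ne', one_smul]
  · rw [mulVec_smul, mulVec_sub, hAx_eq, hAxstar, sub_self, smul_zero]

/-- Converse direction. If λ − (1/t)δ and λ + (1/t)δ are both
achievable input rates, then y = t(x* − x) satisfies Ry = δ, Ay = 0 and
y_j = 0 for all nonbasic j. -/
theorem stmt_6 {m n r : ℕ} (R : Matrix (Fin m) (Fin n) ℝ)
    (A : Matrix (Fin r) (Fin n) ℝ) (hA : ∀ i j, 0 ≤ A i j)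
    (lam : Fin m → ℝ) (hlam : 0 ≤ lam)
    (xstar : Fin n → ℝ)
    (hxpos : 0 ≤ xstar) (hRx : R.mulVec xstar = lam)
    (hAx : ∀ k, A.mulVec xstar k = 1)
    (hopt : ∀ (ρ : ℝ) (x : Fin n → ℝ), 0 ≤ x → R.mulVec x = lam →
      (∀ k, A.mulVec x k ≤ ρ) → 1 ≤ ρ)
    (huniq : ∀ x : Fin n → ℝ, 0 ≤ x → R.mulVec x = lam →
      (∀ k, A.mulVec x k ≤ 1) → x = xstar)
    (δ : Fin m → ℝ) (t : ℝ) (ht : 0 < t)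
    (x x' : Fin n → ℝ) (hx : 0 ≤ x) (hx' : 0 ≤ x')
    (hAxle : ∀ k, A.mulVec x k ≤ 1) (hAx'le : ∀ k, A.mulVec x' k ≤ 1)
    (hRxeq : R.mulVec x = lam - (1 / t) • δ)
    (hRx'eq : R.mulVec x' = lam + (1 / t) • δ) :
    R.mulVec (t • (xstar - x)) = δ ∧ A.mulVec (t • (xstar - x)) = 0 ∧
      ∀ j, xstar j = 0 → (t • (xstar - x)) j = 0 :=
  stmt_6_general R A lam xstar hRx hAx huniq δ t ht x x' hx hx' hAxle hAx'le hRxeq hRx'eq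
end

section
/- Static reachability via state maintenance: under the heavy traffic assumption (Rx* = λ, Ax* = e, x* ≥ 0), if q' is reachable from q in time s (i.e., ∃x ≥ 0 with Ax ≤ e, Rx = λ − (1/s)(q'−q)), then for every t ≥ s, q' is also reachable from q in time exactly t. -/
open Matrix

/-- If q' is reachable from q in time s, then for every t ≥ s it
is reachable in time exactly t (by mixing with the nominal plan x*). -/
theorem stmt_19 {m n r : ℕ} (R : Matrix (Fin m) (Fin n) ℝ)
    (A : Matrix (Fin r) (Fin n) ℝ) (hA : ∀ i j, 0 ≤ A i j)
    (lam : Fin m → ℝ)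
    (xstar : Fin n → ℝ)
    (hxpos : 0 ≤ xstar) (hRx : R.mulVec xstar = lam)
    (hAx : ∀ k, A.mulVec xstar k = 1)
    (q q' : Fin m → ℝ) (s : ℝ) (hs : 0 < s)
    (x : Fin n → ℝ) (hx : 0 ≤ x) (hAxle : ∀ k, A.mulVec x k ≤ 1)
    (hreach : R.mulVec x = lam - (1 / s) • (q' - q)) :
    ∀ t : ℝ, s ≤ t → ∃ x'' : Fin n → ℝ, 0 ≤ x'' ∧
      (∀ k, A.mulVec x'' k ≤ 1) ∧
      R.mulVec x'' = lam - (1 / t) • (q' - q) := by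
  intro t hts
  have ht : 0 < t := lt_of_lt_of_le hs hts
  have hst0 : 0 ≤ s / t := div_nonneg hs.le ht.le
  have hst1 : s / t ≤ 1 := (div_le_one ht).mpr hts
  refine ⟨(s / t) • x + (1 - s / t) • xstar, ?_, ?_, ?_⟩
  · intro j
    have := hx j
    have := hxpos j
    have h1 : 0 ≤ 1 - s / t := by linarith
    simp only [Pi.add_apply, Pi.smul_apply, smul_eq_mul]
    nlinarith [hx j, hxpos j]
  · intro k
    rw [mulVec_add, mulVec_smul, mulVec_smul]
    simp only [Pi.add_apply, Pi.smul_apply, smul_eq_mul, hAx k]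
    nlinarith [hAxle k]
  · rw [mulVec_add, mulVec_smul, mulVec_smul, hreach, hRx]
    funext i
    simp only [Pi.add_apply, Pi.smul_apply, Pi.sub_apply, smul_eq_mul]
    field_simp
    ring
end
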